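/- If W, V : G × G → B_X are mutually orthogonal partial cotranslations, then the projector of the units space of W, namely P(g) = W(g, e), is an invariant projector for W + V, and moreover (W(g,h) + V(g,h)) ∘ W(g, e) = W(g, h) for all g, h ∈ G. -/

import Mathlib

/-!
Taking `h = 1` in the cotranslation identity gives `W(g,k) ∘ W(g,e) = W(g,k)`, and taking `k = e`
gives `W(hg,e) ∘ W(g,h) = W(g,h)`; so `W(g,e)` is idempotent and is a right unit for `W(g,·)` and a
left unit for `W(·,h)`. Orthogonality kills the cross terms `V(g,h) ∘ W(g,e)` and `W(hg,e) ∘ V(g,h)`,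
so both sides of the invariance identity for `W + V` reduce to `W(g,h)`.
-/

section

variable {G R : Type*} [Monoid G]

def IsPartialCotranslation [Mul R] (W : G → G → R) : Prop :=
  ∀ g h k : G, W g (k * h) = W (h * g) k * W g h

def MutuallyOrthogonal [Mul R] [Zero R] (W V : G → G → R) : Prop :=
  ∀ g h k : G, W (h * g) k * V g h = 0 ∧ V (h * g) k * W g h = 0

def IsInvariantProjector [Mul R] (U : G → G → R) (P : G → R) : Prop :=
  (∀ g : G, IsIdempotentElem (P g)) ∧ ∀ g h : G, P (h * g) * U g h = U g h * P g

namespace IsPartialCotranslation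

section Mul

variable [MulOneClass R] {W : G → G → R}

theorem mul_units (hW : IsPartialCotranslation W) (g h : G) : W g h * W g 1 = W g h := by
  simpa using (hW g 1 h).symm

theorem units_mul (hW : IsPartialCotranslation W) (g h : G) : W (h * g) 1 * W g h = W g h := by
  simpa using (hW g h 1).symm

theorem isIdempotentElem_units (hW : IsPartialCotranslation W) (g : G) :
    IsIdempotentElem (W g 1) :=
  hW.mul_units g 1

end Mul

section Semiring

variable [NonAssocSemiring R] {W V : G → G → R}

theorem add_mul_units (hW : IsPartialCotranslation W) (horth : MutuallyOrthogonal W V) (g h : G) :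
    (W g h + V g h) * W g 1 = W g h := by
  have hVW : V g h * W g 1 = 0 := by simpa using (horth g 1 h).2
  rw [add_mul, hW.mul_units, hVW, add_zero]

theorem units_mul_add (hW : IsPartialCotranslation W) (horth : MutuallyOrthogonal W V) (g h : G) :
    W (h * g) 1 * (W g h + V g h) = W g h := by
  rw [mul_add, hW.units_mul, (horth g h 1).1, add_zero]

theorem isInvariantProjector_units_add (hW : IsPartialCotranslation W)
    (horth : MutuallyOrthogonal W V) : IsInvariantProjector (W + V) (fun g => W g 1) :=
  ⟨hW.isIdempotentElem_units, fun g h => by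
    simp only [Pi.add_apply]
    rw [hW.units_mul_add horth, hW.add_mul_units horth]⟩

end Semiring

end IsPartialCotranslation

end

theorem partial_cotranslation_units_projector_sum_general {𝕜 : Type*} [NontriviallyNormedField 𝕜]
    {G X : Type*} [Group G] [NormedAddCommGroup X] [NormedSpace 𝕜 X]
    (W V : G → G → (X →L[𝕜] X))
    (hW : ∀ g h k : G, W g (k * h) = W (h * g) k ∘L W g h)
    (horth : ∀ g h k : G, W (h * g) k ∘L V g h = 0 ∧ V (h * g) k ∘L W g h = 0) :
    (∀ g : G, W g 1 ∘L W g 1 = W g 1) ∧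
    (∀ g h : G, W (h * g) 1 ∘L (W g h + V g h) = (W g h + V g h) ∘L W g 1) ∧
    (∀ g h : G, (W g h + V g h) ∘L W g 1 = W g h) := by
  have hW' : IsPartialCotranslation W := hW
  have horth' : MutuallyOrthogonal W V := horth
  obtain ⟨hidem, hinv⟩ := hW'.isInvariantProjector_units_add horth'
  exact ⟨hidem, hinv, hW'.add_mul_units horth'⟩

/-- If `W, V` are mutually orthogonal partial cotranslations, then the units-space
projector `P(g) = W(g,e)` of `W` is an invariant projector for `W + V`, and the
partial cotranslation obtained from `W + V` and this projector is `W` itself. -/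
theorem partial_cotranslation_units_projector_sum {𝕜 : Type*} [NontriviallyNormedField 𝕜]
    {G X : Type*} [Group G] [NormedAddCommGroup X] [NormedSpace 𝕜 X] [CompleteSpace X]
    (W V : G → G → (X →L[𝕜] X))
    (hW : ∀ g h k : G, W g (k * h) = W (h * g) k ∘L W g h)
    (hV : ∀ g h k : G, V g (k * h) = V (h * g) k ∘L V g h)
    (horth : ∀ g h k : G, W (h * g) k ∘L V g h = 0 ∧ V (h * g) k ∘L W g h = 0) :
    (∀ g : G, W g 1 ∘L W g 1 = W g 1) ∧
    (∀ g h : G, W (h * g) 1 ∘L (W g h + V g h) = (W g h + V g h) ∘L W g 1) ∧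
    (∀ g h : G, (W g h + V g h) ∘L W g 1 = W g h) :=
  partial_cotranslation_units_projector_sum_general W V hW horth
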